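/- Let (Ω,𝒜,μ) be a σ-finite diffuse measure space and let u ∈ L∞(μ). Then for every compact linear operator K on L_1(μ), one has ‖M_u + K‖ ≥ ‖u‖_∞; consequently the essential norm of the multiplication operator M_u on L_1(μ) equals ‖u‖_∞. -/

import Mathlib

open MeasureTheory Filter ENNReal

/-- A measurable set `B` is an atom of `μ`. -/
def IsAtomSet {Ω : Type*} [MeasurableSpace Ω] (μ : Measure Ω) (B : Set Ω) : Prop :=
  MeasurableSet B ∧ 0 < μ B ∧ ∀ B' ⊆ B, MeasurableSet B' → μ B' = 0 ∨ μ B' = μ B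

/-- A measure is diffuse (nonatomic) if it has no atoms. -/
def IsDiffuse {Ω : Type*} [MeasurableSpace Ω] (μ : Measure Ω) : Prop :=
  ∀ B : Set Ω, ¬ IsAtomSet μ B

/-! If `c < ‖u‖∞`, the set `{c < ‖u‖}` has positive measure; by σ-finiteness and diffuseness it
contains infinitely many disjoint sets `Sₙ` of finite positive measure. The normalized indicators
`gₙ` of the `Sₙ` are unit vectors with `‖gₙ - gₘ‖ ≥ 1` for `n ≠ m`, supported where `|u| > c`, so
`M_u` stretches `gₙ - gₘ` by at least `c`. A compact `K` maps the `gₙ` into a compact set, so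
`‖K (gₙ - gₘ)‖` is arbitrarily small for some `n ≠ m`, whence `‖M_u + K‖ ≥ c`. Together with
`‖M_u‖ ≤ ‖u‖∞` (the case `K = 0`) this computes the essential norm. -/

open Function

namespace IsDiffuse

variable {Ω : Type*} [MeasurableSpace Ω] {μ : Measure Ω}

lemma exists_subset_measure_pos_diff_pos (hd : IsDiffuse μ) {B : Set Ω} (hB : MeasurableSet B)
    (h0 : 0 < μ B) : ∃ C ⊆ B, MeasurableSet C ∧ 0 < μ C ∧ 0 < μ (B \ C) := by
  have h := hd B
  simp only [IsAtomSet, not_and, not_forall, not_or] at h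
  obtain ⟨C, hCB, hC, hC0, hCB_ne⟩ := h hB h0
  exact ⟨C, hCB, hC, pos_iff_ne_zero.2 hC0, pos_iff_ne_zero.2 fun hdiff =>
    hCB_ne <| (measure_mono hCB).antisymm (measure_mono_ae (ae_le_set.2 hdiff))⟩

/-- Splitting off a piece of positive measure at each step gives a shrinking chain of sets of
positive measure; its successive differences are disjoint. -/
lemma exists_pairwise_disjoint_subsets (hd : IsDiffuse μ) {B : Set Ω} (hB : MeasurableSet B)
    (h0 : 0 < μ B) : ∃ S : ℕ → Set Ω,
      (∀ n, MeasurableSet (S n) ∧ S n ⊆ B ∧ 0 < μ (S n)) ∧ Pairwise (Disjoint on S) := by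
  have split : ∀ C : Set Ω, ∃ C' : Set Ω, MeasurableSet C ∧ 0 < μ C →
      C' ⊆ C ∧ MeasurableSet C' ∧ 0 < μ C' ∧ 0 < μ (C \ C') := by
    intro C
    by_cases hC : MeasurableSet C ∧ 0 < μ C
    · obtain ⟨C', hC'⟩ := exists_subset_measure_pos_diff_pos hd hC.1 hC.2
      exact ⟨C', fun _ => hC'⟩
    · exact ⟨∅, fun h => absurd h hC⟩
  choose next hnext using split
  set chain : ℕ → Set Ω := fun n => next^[n] B
  have hsucc (n : ℕ) : chain (n + 1) = next (chain n) := Function.iterate_succ_apply' _ _ _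
  have hgood (n : ℕ) : MeasurableSet (chain n) ∧ 0 < μ (chain n) := by
    induction n with
    | zero => exact ⟨hB, h0⟩
    | succ n ih => rw [hsucc]; exact ⟨(hnext _ ih).2.1, (hnext _ ih).2.2.1⟩
  have hanti : Antitone chain :=
    antitone_nat_of_succ_le fun n => hsucc n ▸ (hnext _ (hgood n)).1
  refine ⟨fun n => chain n \ chain (n + 1), fun n => ⟨(hgood n).1.diff (hgood (n + 1)).1,
    Set.sdiff_subset.trans (hanti (Nat.zero_le n)), ?_⟩, ?_⟩
  · simpa only [hsucc] using (hnext _ (hgood n)).2.2.2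
  exact (pairwise_disjoint_on _).2 fun m n hmn =>
    Set.disjoint_sdiff_left.mono_right (Set.sdiff_subset.trans (hanti hmn))

end IsDiffuse

section CompactOperator

variable {𝕜 E F : Type*} [NontriviallyNormedField 𝕜] [SeminormedAddCommGroup E]
  [NormedSpace 𝕜 E] [SeminormedAddCommGroup F] [NormedSpace 𝕜 F]

lemma IsCompactOperator.exists_ne_norm_sub_lt {K : E →L[𝕜] F} (hK : IsCompactOperator K)
    {g : ℕ → E} {R : ℝ} (hg : ∀ n, ‖g n‖ ≤ R) {ε : ℝ} (hε : 0 < ε) :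
    ∃ n m, n ≠ m ∧ ‖K (g n) - K (g m)‖ < ε := by
  obtain ⟨L, hL, hKL⟩ := hK.image_closedBall_subset_compact R
  obtain ⟨_, _, φ, hφ, hlim⟩ := hL.tendsto_subseq fun n =>
    hKL ⟨g n, mem_closedBall_zero_iff.2 (hg n), rfl⟩
  obtain ⟨N, hN⟩ := Metric.cauchySeq_iff'.1 hlim.cauchySeq ε hε
  refine ⟨φ (N + 1), φ N, (hφ (Nat.lt_succ_self N)).ne', ?_⟩
  simpa [dist_eq_norm] using hN (N + 1) N.le_succ

lemma le_opNorm_add_of_isCompactOperator {T K : E →L[𝕜] F} (hK : IsCompactOperator K)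
    {g : ℕ → E} {R : ℝ} (hg : ∀ n, ‖g n‖ ≤ R) (hsep : ∀ n m, n ≠ m → 1 ≤ ‖g n - g m‖)
    {c : ℝ} (hT : ∀ n m, n ≠ m → c * ‖g n - g m‖ ≤ ‖T (g n - g m)‖) : c ≤ ‖T + K‖ := by
  refine le_of_forall_pos_le_add fun ε hε => ?_
  obtain ⟨n, m, hnm, hKnm⟩ := hK.exists_ne_norm_sub_lt hg hε
  have hone := hsep n m hnm
  have hKh : ‖K (g n - g m)‖ ≤ ε * ‖g n - g m‖ := by
    rw [map_sub]; nlinarith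
  refine le_of_mul_le_mul_right ?_ (one_pos.trans_le hone)
  calc c * ‖g n - g m‖ ≤ ‖T (g n - g m)‖ := hT n m hnm
    _ = ‖(T + K) (g n - g m) - K (g n - g m)‖ := by simp
    _ ≤ ‖(T + K) (g n - g m)‖ + ‖K (g n - g m)‖ := norm_sub_le _ _
    _ ≤ ‖T + K‖ * ‖g n - g m‖ + ε * ‖g n - g m‖ := add_le_add ((T + K).le_opNorm _) hKh
    _ = (‖T + K‖ + ε) * ‖g n - g m‖ := by ring

end CompactOperator

section MultiplicationOperator

variable {Ω : Type*} [MeasurableSpace Ω] {μ : Measure Ω} {𝕜 : Type*} [RCLike 𝕜]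

lemma exists_measurableSet_pos_lt_norm_of_ofReal_lt_eLpNorm_top [SigmaFinite μ] {E : Type*}
    [NormedAddCommGroup E] {u : Ω → E} (hu : AEStronglyMeasurable u μ) {c : ℝ}
    (hc : ENNReal.ofReal c < eLpNorm u ∞ μ) :
    ∃ t, MeasurableSet t ∧ 0 < μ t ∧ μ t < ∞ ∧ ∀ᵐ x ∂μ, x ∈ t → c < ‖u x‖ := by
  have hA : MeasurableSet {x | c < ‖hu.mk u x‖} :=
    measurableSet_lt measurable_const hu.stronglyMeasurable_mk.norm.measurable
  have hApos : 0 < μ {x | c < ‖hu.mk u x‖} := by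
    refine pos_iff_ne_zero.2 fun h0 => hc.not_ge ?_
    rw [eLpNorm_congr_ae hu.ae_eq_mk, eLpNorm_exponent_top]
    refine eLpNormEssSup_le_of_ae_bound (measure_eq_zero_iff_ae_notMem.1 h0 |>.mono ?_)
    exact fun x hx => not_lt.1 hx
  obtain ⟨t, ht, htA, htpos, htfin⟩ := Measure.exists_subset_measure_lt_top hA hApos
  refine ⟨t, ht, htpos, htfin, ?_⟩
  filter_upwards [hu.ae_eq_mk] with x hx hxt
  exact hx ▸ htA hxt

variable {u : Ω → 𝕜} {Mu : Lp 𝕜 1 μ →L[𝕜] Lp 𝕜 1 μ}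

lemma opNorm_le_eLpNorm_top_of_ae_eq_mul
    (hMu : ∀ f : Lp 𝕜 1 μ, (Mu f : Ω → 𝕜) =ᵐ[μ] fun x => u x * f x)
    (hu : eLpNorm u ∞ μ ≠ ∞) : ‖Mu‖ ≤ (eLpNorm u ∞ μ).toReal := by
  refine Mu.opNorm_le_bound ENNReal.toReal_nonneg fun f => Lp.norm_le_mul_norm_of_ae_le_mul ?_
  filter_upwards [hMu f, enorm_ae_le_eLpNormEssSup u μ] with x hx hux
  rw [hx, norm_mul]
  gcongr
  rw [← eLpNorm_exponent_top] at hux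
  simpa using ENNReal.toReal_mono hu hux

lemma mul_norm_le_norm_apply_of_ae_le_norm
    (hMu : ∀ f : Lp 𝕜 1 μ, (Mu f : Ω → 𝕜) =ᵐ[μ] fun x => u x * f x)
    {f : Lp 𝕜 1 μ} {c : ℝ} (hc : 0 < c) (hf : ∀ᵐ x ∂μ, f x ≠ 0 → c ≤ ‖u x‖) :
    c * ‖f‖ ≤ ‖Mu f‖ := by
  rw [← le_inv_mul_iff₀ hc]
  refine Lp.norm_le_mul_norm_of_ae_le_mul ?_
  filter_upwards [hMu f, hf] with x hx hfx
  rw [le_inv_mul_iff₀ hc, hx, norm_mul]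
  by_cases h0 : f x = 0
  · simp [h0]
  · exact mul_le_mul_of_nonneg_right (hfx h0) (norm_nonneg _)

lemma exists_normalized_indicators_of_pairwise_disjoint {S : ℕ → Set Ω}
    (hS : ∀ n, MeasurableSet (S n)) (hfin : ∀ n, μ (S n) ≠ ∞) (hpos : ∀ n, μ (S n) ≠ 0)
    (hdisj : Pairwise (Disjoint on S)) :
    ∃ g : ℕ → Lp 𝕜 1 μ, (∀ n, ‖g n‖ = 1) ∧ (∀ n m, n ≠ m → 1 ≤ ‖g n - g m‖) ∧
      ∀ n, ∀ᵐ x ∂μ, g n x ≠ 0 → x ∈ S n := by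
  set g : ℕ → Lp 𝕜 1 μ := fun n =>
    indicatorConstLp 1 (hS n) (hfin n) (((μ.real (S n))⁻¹ : ℝ) : 𝕜)
  have hnorm (n : ℕ) : ‖g n‖ = 1 := by
    have : 0 < μ.real (S n) := ENNReal.toReal_pos (hpos n) (hfin n)
    rw [norm_indicatorConstLp one_ne_zero one_ne_top, RCLike.norm_ofReal,
      abs_of_pos (inv_pos.2 this)]
    simp [this.ne']
  have hcoe (n : ℕ) : g n =ᵐ[μ] (S n).indicator fun _ => (((μ.real (S n))⁻¹ : ℝ) : 𝕜) :=
    indicatorConstLp_coeFn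
  refine ⟨g, hnorm, fun n m hnm => ?_, fun n => ?_⟩
  · rw [← hnorm n]
    refine Lp.norm_le_norm_of_ae_le ?_
    filter_upwards [Lp.coeFn_sub (g n) (g m), hcoe n, hcoe m] with x hsub hn hm
    rw [hsub, Pi.sub_apply, hn, hm]
    by_cases hx : x ∈ S n
    · simp [hx, (hdisj hnm).notMem_of_mem_left hx]
    · simp [hx]
  · filter_upwards [hcoe n] with x hx hne
    exact Set.mem_of_indicator_ne_zero (hx ▸ hne)

lemma le_opNorm_add_of_lt_eLpNorm_top [SigmaFinite μ] (hd : IsDiffuse μ) (hu : MemLp u ∞ μ)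
    (hMu : ∀ f : Lp 𝕜 1 μ, (Mu f : Ω → 𝕜) =ᵐ[μ] fun x => u x * f x)
    {K : Lp 𝕜 1 μ →L[𝕜] Lp 𝕜 1 μ} (hK : IsCompactOperator K) {c : ℝ}
    (hc : c < (eLpNorm u ∞ μ).toReal) : c ≤ ‖Mu + K‖ := by
  rcases le_or_gt c 0 with hc0 | hc0
  · exact hc0.trans (norm_nonneg _)
  obtain ⟨t, ht, htpos, htfin, hut⟩ := exists_measurableSet_pos_lt_norm_of_ofReal_lt_eLpNorm_top
    hu.1 ((ENNReal.ofReal_lt_iff_lt_toReal hc0.le hu.2.ne).2 hc)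
  obtain ⟨S, hS, hdisj⟩ := IsDiffuse.exists_pairwise_disjoint_subsets hd ht htpos
  obtain ⟨g, hg, hsep, hsupp⟩ := exists_normalized_indicators_of_pairwise_disjoint (𝕜 := 𝕜)
    (fun n => (hS n).1) (fun n => ne_top_of_le_ne_top htfin.ne (measure_mono (hS n).2.1))
    (fun n => (hS n).2.2.ne') hdisj
  refine le_opNorm_add_of_isCompactOperator hK (fun n => (hg n).le) hsep
    fun n m _ => mul_norm_le_norm_apply_of_ae_le_norm hMu hc0 ?_
  filter_upwards [Lp.coeFn_sub (g n) (g m), hsupp n, hsupp m, hut] with x hsub hn hm hx hne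
  refine (hx ?_).le
  by_contra hxt
  have hgn : g n x = 0 := by_contra fun h => hxt ((hS n).2.1 (hn h))
  have hgm : g m x = 0 := by_contra fun h => hxt ((hS m).2.1 (hm h))
  exact hne (by rw [hsub, Pi.sub_apply, hgn, hgm, sub_zero])

end MultiplicationOperator

theorem stmt14 {Ω : Type*} [MeasurableSpace Ω] {𝕜 : Type*} [RCLike 𝕜]
    (μ : Measure Ω) [SigmaFinite μ] (hdiffuse : IsDiffuse μ)
    (u : Ω → 𝕜) (hu : MemLp u ∞ μ)
    (Mu : Lp 𝕜 1 μ →L[𝕜] Lp 𝕜 1 μ)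
    (hMu : ∀ f : Lp 𝕜 1 μ, (Mu f : Ω → 𝕜) =ᵐ[μ] fun x => u x * f x) :
    (∀ K : Lp 𝕜 1 μ →L[𝕜] Lp 𝕜 1 μ, IsCompactOperator K →
      ‖Mu + K‖ ≥ (eLpNorm u ∞ μ).toReal) ∧
    sInf {r : ℝ | ∃ K : Lp 𝕜 1 μ →L[𝕜] Lp 𝕜 1 μ, IsCompactOperator K ∧ r = ‖Mu + K‖}
      = (eLpNorm u ∞ μ).toReal := by
  have hlower (K : Lp 𝕜 1 μ →L[𝕜] Lp 𝕜 1 μ) (hK : IsCompactOperator K) :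
      (eLpNorm u ∞ μ).toReal ≤ ‖Mu + K‖ :=
    le_of_forall_lt_imp_le_of_dense fun c hc =>
      le_opNorm_add_of_lt_eLpNorm_top hdiffuse hu hMu hK hc
  refine ⟨hlower, IsLeast.csInf_eq ⟨⟨0, isCompactOperator_zero, ?_⟩, ?_⟩⟩
  · rw [add_zero]
    exact le_antisymm (by simpa using hlower 0 isCompactOperator_zero)
      (opNorm_le_eLpNorm_top_of_ae_eq_mul hMu hu.2.ne)
  · rintro r ⟨K, hK, rfl⟩
    exact hlower K hK
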